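/- Let L ≥ 1, let N, n, and m_1,…,m_L be positive integers, let p be a probability vector on a set of size N, let k ∈ {1,…,N} be an index with π := p_k, and let e_k be the corresponding one-hot vector. Let W be an N × n real matrix whose singular values all lie in [a^W, b^W] with 0 ≤ a^W; for each j ∈ {1,…,L} let J_j be an n × n real matrix whose singular values all lie in [a_j^J, b_j^J] with 0 ≤ a_j^J; and for each l ∈ {1,…,L} let G_l be an n × m_l real matrix whose singular values all lie in [a_l^G, b_l^G] with 0 ≤ a_l^G. For each l define the row vector g_l := (e_k − p) · W · (J_L J_{L−1} ⋯ J_l) · G_l, and set ‖g‖₂ := √(∑_{l=1}^L ‖g_l‖₂²). Then ((1 − π)/√L) · ∑_{l=1}^L (a^W a_l^G ∏_{j=l}^L a_j^J) ≤ ‖g‖₂ ≤ √2 · (1 − π) · ∑_{l=1}^L (b^W b_l^G ∏_{j=l}^L b_j^J). -/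

import Mathlib

open Matrix Finset

/-- Euclidean norm of a (row) vector: `√(∑ j, x j ^ 2)`. -/
noncomputable def euclNorm {ι : Type*} [Fintype ι] (x : ι → ℝ) : ℝ :=
  Real.sqrt (∑ j, x j ^ 2)

/-- The singular values of a real matrix `M`, i.e. the square roots of the
eigenvalues of the positive semidefinite matrix `M * Mᵀ`. -/
noncomputable def singularValues {N M : ℕ} (A : Matrix (Fin N) (Fin M) ℝ) : Fin N → ℝ :=
  fun i => Real.sqrt ((Matrix.isHermitian_mul_conjTranspose_self A).eigenvalues i)

/-- `descProd J l c = J (l+c-1) * J (l+c-2) * ⋯ * J l`, the descending product of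
`c` consecutive square matrices starting from index `l`. -/
noncomputable def descProd {n : ℕ} (J : ℕ → Matrix (Fin n) (Fin n) ℝ) :
    ℕ → ℕ → Matrix (Fin n) (Fin n) ℝ
  | _, 0 => 1
  | l, c + 1 => J (l + c) * descProd J l c

/-! Each block `g_l` is the image of `e_k - p` under a product of matrices with pinned singular
values, so `‖g_l‖` lies between the products of the lower and upper bounds times `‖e_k - p‖`.
Since the coordinates of `p` off `k` carry total mass `1 - π`, `1 - π ≤ ‖e_k - p‖ ≤ √2 (1 - π)`.
Finally `(∑ ‖g_l‖) / √L ≤ √(∑ ‖g_l‖²) ≤ ∑ ‖g_l‖` by Cauchy–Schwarz and nonnegativity. -/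

open scoped ComplexOrder
open Unitary

namespace Matrix.IsHermitian

section RCLike

variable {𝕜 n : Type*} [RCLike 𝕜] [Fintype n] [DecidableEq n] {H : Matrix n n 𝕜}

lemma sub_smul_one_eq_conj_diagonal (hH : H.IsHermitian) (c : ℝ) :
    H - (c : 𝕜) • 1 = conjStarAlgAut 𝕜 _ hH.eigenvectorUnitary
      (diagonal fun i => ((hH.eigenvalues i - c : ℝ) : 𝕜)) := by
  conv_lhs => rw [hH.spectral_theorem]
  rw [← map_one (conjStarAlgAut 𝕜 _ hH.eigenvectorUnitary), ← map_smul, ← map_sub]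
  congr 1
  ext i j
  by_cases h : i = j <;> simp [h, Algebra.algebraMap_eq_smul_one, sub_smul]

lemma posSemidef_sub_smul_one (hH : H.IsHermitian) {c : ℝ} (hc : ∀ i, c ≤ hH.eigenvalues i) :
    (H - (c : 𝕜) • 1).PosSemidef := by
  rw [hH.sub_smul_one_eq_conj_diagonal, conjStarAlgAut_apply,
    isUnit_coe.posSemidef_star_right_conjugate_iff, posSemidef_diagonal_iff]
  exact fun i => RCLike.ofReal_nonneg.mpr (sub_nonneg.mpr (hc i))

lemma posSemidef_smul_one_sub (hH : H.IsHermitian) {C : ℝ} (hC : ∀ i, hH.eigenvalues i ≤ C) :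
    ((C : 𝕜) • 1 - H).PosSemidef := by
  rw [← neg_sub, hH.sub_smul_one_eq_conj_diagonal, conjStarAlgAut_apply, ← neg_mul, ← mul_neg,
    diagonal_neg, isUnit_coe.posSemidef_star_right_conjugate_iff, posSemidef_diagonal_iff]
  exact fun i => by simpa using hC i

end RCLike

variable {n : Type*} [Fintype n] [DecidableEq n] {H : Matrix n n ℝ}

lemma mul_dotProduct_self_le_dotProduct_mulVec (hH : H.IsHermitian) {c : ℝ}
    (hc : ∀ i, c ≤ hH.eigenvalues i) (x : n → ℝ) : c * (x ⬝ᵥ x) ≤ x ⬝ᵥ (H *ᵥ x) := by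
  have h := (hH.posSemidef_sub_smul_one hc).dotProduct_mulVec_nonneg x
  simp only [star_trivial, sub_mulVec, smul_mulVec, one_mulVec, dotProduct_sub,
    dotProduct_smul, RCLike.ofReal_real_eq_id, id, smul_eq_mul] at h
  linarith

lemma dotProduct_mulVec_le_mul_dotProduct_self (hH : H.IsHermitian) {C : ℝ}
    (hC : ∀ i, hH.eigenvalues i ≤ C) (x : n → ℝ) : x ⬝ᵥ (H *ᵥ x) ≤ C * (x ⬝ᵥ x) := by
  have h := (hH.posSemidef_smul_one_sub hC).dotProduct_mulVec_nonneg x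
  simp only [star_trivial, sub_mulVec, smul_mulVec, one_mulVec, dotProduct_sub,
    dotProduct_smul, RCLike.ofReal_real_eq_id, id, smul_eq_mul] at h
  linarith

end Matrix.IsHermitian

section EuclNorm

variable {ι : Type*} [Fintype ι]

lemma euclNorm_nonneg (x : ι → ℝ) : 0 ≤ euclNorm x :=
  Real.sqrt_nonneg _

lemma euclNorm_sq (x : ι → ℝ) : euclNorm x ^ 2 = x ⬝ᵥ x := by
  rw [euclNorm, Real.sq_sqrt (by positivity)]
  simp only [dotProduct, sq]

lemma abs_apply_le_euclNorm (x : ι → ℝ) (k : ι) : |x k| ≤ euclNorm x :=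
  Real.abs_le_sqrt (single_le_sum (f := fun j => x j ^ 2) (fun _ _ => sq_nonneg _) (mem_univ k))

lemma euclNorm_vecMul_sq {κ : Type*} [Fintype κ] (A : Matrix ι κ ℝ) (x : ι → ℝ) :
    euclNorm (x ᵥ* A) ^ 2 = x ⬝ᵥ ((A * Aᴴ) *ᵥ x) := by
  rw [euclNorm_sq, conjTranspose_eq_transpose_of_trivial, ← mulVec_mulVec, mulVec_transpose,
    dotProduct_mulVec]

end EuclNorm

section SingularValues

variable {N M : ℕ}

lemma singularValues_sq (A : Matrix (Fin N) (Fin M) ℝ) (i : Fin N) :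
    singularValues A i ^ 2 = (isHermitian_mul_conjTranspose_self A).eigenvalues i :=
  Real.sq_sqrt (eigenvalues_self_mul_conjTranspose_nonneg A i)

lemma mul_euclNorm_le_euclNorm_vecMul (A : Matrix (Fin N) (Fin M) ℝ) {a : ℝ} (ha : 0 ≤ a)
    (hA : ∀ i, a ≤ singularValues A i) (x : Fin N → ℝ) : a * euclNorm x ≤ euclNorm (x ᵥ* A) := by
  refine (pow_le_pow_iff_left₀ (by positivity [euclNorm_nonneg x]) (euclNorm_nonneg _)
    two_ne_zero).mp ?_
  have hc : ∀ i, a ^ 2 ≤ (isHermitian_mul_conjTranspose_self A).eigenvalues i := fun i => by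
    rw [← singularValues_sq]; exact pow_le_pow_left₀ ha (hA i) 2
  rw [mul_pow, euclNorm_sq, euclNorm_vecMul_sq]
  exact (isHermitian_mul_conjTranspose_self A).mul_dotProduct_self_le_dotProduct_mulVec hc x

lemma euclNorm_vecMul_le (A : Matrix (Fin N) (Fin M) ℝ) {b : ℝ} (hb : 0 ≤ b)
    (hA : ∀ i, singularValues A i ≤ b) (x : Fin N → ℝ) : euclNorm (x ᵥ* A) ≤ b * euclNorm x := by
  refine (pow_le_pow_iff_left₀ (euclNorm_nonneg _) (by positivity [euclNorm_nonneg x])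
    two_ne_zero).mp ?_
  have hC : ∀ i, (isHermitian_mul_conjTranspose_self A).eigenvalues i ≤ b ^ 2 := fun i => by
    rw [← singularValues_sq]; exact pow_le_pow_left₀ (Real.sqrt_nonneg _) (hA i) 2
  rw [mul_pow, euclNorm_vecMul_sq, euclNorm_sq]
  exact (isHermitian_mul_conjTranspose_self A).dotProduct_mulVec_le_mul_dotProduct_self hC x

end SingularValues

section DescProd

variable {n : ℕ} (J : ℕ → Matrix (Fin n) (Fin n) ℝ) (a b : ℕ → ℝ)

lemma prod_mul_euclNorm_le_euclNorm_vecMul_descProd (l c : ℕ)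
    (ha : ∀ j ∈ Ico l (l + c), 0 ≤ a j)
    (hJ : ∀ j ∈ Ico l (l + c), ∀ i, a j ≤ singularValues (J j) i) (y : Fin n → ℝ) :
    (∏ j ∈ Ico l (l + c), a j) * euclNorm y ≤ euclNorm (y ᵥ* descProd J l c) := by
  induction c generalizing y with
  | zero => simp [descProd]
  | succ c ih =>
    have hsub : Ico l (l + c) ⊆ Ico l (l + (c + 1)) := Ico_subset_Ico_right (by omega)
    have htop : l + c ∈ Ico l (l + (c + 1)) := mem_Ico.mpr ⟨by omega, by omega⟩
    have hP : 0 ≤ ∏ j ∈ Ico l (l + c), a j := prod_nonneg fun j hj => ha j (hsub hj)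
    rw [← add_assoc, prod_Ico_succ_top (by omega), descProd, ← vecMul_vecMul]
    calc (∏ j ∈ Ico l (l + c), a j) * a (l + c) * euclNorm y
        = (∏ j ∈ Ico l (l + c), a j) * (a (l + c) * euclNorm y) := mul_assoc _ _ _
      _ ≤ (∏ j ∈ Ico l (l + c), a j) * euclNorm (y ᵥ* J (l + c)) :=
        mul_le_mul_of_nonneg_left
          (mul_euclNorm_le_euclNorm_vecMul _ (ha _ htop) (hJ _ htop) y) hP
      _ ≤ euclNorm (y ᵥ* J (l + c) ᵥ* descProd J l c) :=
        ih (fun j hj => ha j (hsub hj)) (fun j hj => hJ j (hsub hj)) _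

lemma euclNorm_vecMul_descProd_le_prod_mul (l c : ℕ)
    (hb : ∀ j ∈ Ico l (l + c), 0 ≤ b j)
    (hJ : ∀ j ∈ Ico l (l + c), ∀ i, singularValues (J j) i ≤ b j) (y : Fin n → ℝ) :
    euclNorm (y ᵥ* descProd J l c) ≤ (∏ j ∈ Ico l (l + c), b j) * euclNorm y := by
  induction c generalizing y with
  | zero => simp [descProd]
  | succ c ih =>
    have hsub : Ico l (l + c) ⊆ Ico l (l + (c + 1)) := Ico_subset_Ico_right (by omega)
    have htop : l + c ∈ Ico l (l + (c + 1)) := mem_Ico.mpr ⟨by omega, by omega⟩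
    have hP : 0 ≤ ∏ j ∈ Ico l (l + c), b j := prod_nonneg fun j hj => hb j (hsub hj)
    rw [← add_assoc, prod_Ico_succ_top (by omega), descProd, ← vecMul_vecMul]
    calc euclNorm (y ᵥ* J (l + c) ᵥ* descProd J l c)
        ≤ (∏ j ∈ Ico l (l + c), b j) * euclNorm (y ᵥ* J (l + c)) :=
        ih (fun j hj => hb j (hsub hj)) (fun j hj => hJ j (hsub hj)) _
      _ ≤ (∏ j ∈ Ico l (l + c), b j) * (b (l + c) * euclNorm y) :=
        mul_le_mul_of_nonneg_left (euclNorm_vecMul_le _ (hb _ htop) (hJ _ htop) y) hP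
      _ = (∏ j ∈ Ico l (l + c), b j) * b (l + c) * euclNorm y := (mul_assoc _ _ _).symm

end DescProd

section Backprop

variable {N n m : ℕ} (x : Fin N → ℝ) (W : Matrix (Fin N) (Fin n) ℝ)
  (J : ℕ → Matrix (Fin n) (Fin n) ℝ) (G : Matrix (Fin n) (Fin m) ℝ) {l L : ℕ}

lemma mul_euclNorm_le_euclNorm_backprop (hl : l ≤ L) {aW aG : ℝ} {aJ : ℕ → ℝ} (haW : 0 ≤ aW)
    (hW : ∀ i, aW ≤ singularValues W i) (haJ : ∀ j ∈ Ico l L, 0 ≤ aJ j)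
    (hJ : ∀ j ∈ Ico l L, ∀ i, aJ j ≤ singularValues (J j) i) (haG : 0 ≤ aG)
    (hG : ∀ i, aG ≤ singularValues G i) :
    aW * aG * (∏ j ∈ Ico l L, aJ j) * euclNorm x
      ≤ euclNorm (x ᵥ* W ᵥ* descProd J l (L - l) ᵥ* G) := by
  have hD := prod_mul_euclNorm_le_euclNorm_vecMul_descProd J aJ l (L - l)
  rw [Nat.add_sub_cancel' hl] at hD
  have hP : 0 ≤ ∏ j ∈ Ico l L, aJ j := prod_nonneg haJ
  calc aW * aG * (∏ j ∈ Ico l L, aJ j) * euclNorm x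
      = aG * ((∏ j ∈ Ico l L, aJ j) * (aW * euclNorm x)) := by ring
    _ ≤ aG * ((∏ j ∈ Ico l L, aJ j) * euclNorm (x ᵥ* W)) := by
      gcongr; exact mul_euclNorm_le_euclNorm_vecMul W haW hW x
    _ ≤ aG * euclNorm (x ᵥ* W ᵥ* descProd J l (L - l)) := by
      gcongr; exact hD haJ hJ _
    _ ≤ euclNorm (x ᵥ* W ᵥ* descProd J l (L - l) ᵥ* G) :=
      mul_euclNorm_le_euclNorm_vecMul G haG hG _

lemma euclNorm_backprop_le (hl : l ≤ L) {bW bG : ℝ} {bJ : ℕ → ℝ} (hbW : 0 ≤ bW)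
    (hW : ∀ i, singularValues W i ≤ bW) (hbJ : ∀ j ∈ Ico l L, 0 ≤ bJ j)
    (hJ : ∀ j ∈ Ico l L, ∀ i, singularValues (J j) i ≤ bJ j) (hbG : 0 ≤ bG)
    (hG : ∀ i, singularValues G i ≤ bG) :
    euclNorm (x ᵥ* W ᵥ* descProd J l (L - l) ᵥ* G)
      ≤ bW * bG * (∏ j ∈ Ico l L, bJ j) * euclNorm x := by
  have hD := euclNorm_vecMul_descProd_le_prod_mul J bJ l (L - l)
  rw [Nat.add_sub_cancel' hl] at hD
  have hP : 0 ≤ ∏ j ∈ Ico l L, bJ j := prod_nonneg hbJ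
  calc euclNorm (x ᵥ* W ᵥ* descProd J l (L - l) ᵥ* G)
      ≤ bG * euclNorm (x ᵥ* W ᵥ* descProd J l (L - l)) := euclNorm_vecMul_le G hbG hG _
    _ ≤ bG * ((∏ j ∈ Ico l L, bJ j) * euclNorm (x ᵥ* W)) := by
      gcongr; exact hD hbJ hJ _
    _ ≤ bG * ((∏ j ∈ Ico l L, bJ j) * (bW * euclNorm x)) := by
      gcongr; exact euclNorm_vecMul_le W hbW hW x
    _ = bW * bG * (∏ j ∈ Ico l L, bJ j) * euclNorm x := by ring

end Backprop

section ProbabilityVector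

variable {ι : Type*} [Fintype ι] [DecidableEq ι] (p : ι → ℝ) (k : ι)

lemma sub_le_euclNorm_single_sub : 1 - p k ≤ euclNorm (Pi.single k 1 - p) := calc
  1 - p k = ((Pi.single k 1 : ι → ℝ) - p) k := by simp
  _ ≤ euclNorm (Pi.single k 1 - p) := (le_abs_self _).trans (abs_apply_le_euclNorm _ k)

lemma euclNorm_single_sub_le (hp : ∀ j, 0 ≤ p j) (hsum : ∑ j, p j = 1) :
    euclNorm (Pi.single k 1 - p) ≤ Real.sqrt 2 * (1 - p k) := by
  have hrest : ∑ j ∈ univ.erase k, p j = 1 - p k := by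
    rw [sum_erase_eq_sub (mem_univ k), hsum]
  have hpk : 0 ≤ 1 - p k := hrest ▸ sum_nonneg fun j _ => hp j
  have hsq : ∑ j, ((Pi.single k 1 : ι → ℝ) - p) j ^ 2 ≤ 2 * (1 - p k) ^ 2 := calc
    ∑ j, ((Pi.single k 1 : ι → ℝ) - p) j ^ 2
        = (1 - p k) ^ 2 + ∑ j ∈ univ.erase k, p j ^ 2 := by
      rw [← add_sum_erase _ _ (mem_univ k)]
      congr 1
      · simp
      · exact sum_congr rfl fun j hj => by simp [Pi.single_eq_of_ne (ne_of_mem_erase hj)]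
    _ ≤ (1 - p k) ^ 2 + (∑ j ∈ univ.erase k, p j) ^ 2 := by
      gcongr; exact sum_sq_le_sq_sum_of_nonneg fun j _ => hp j
    _ = 2 * (1 - p k) ^ 2 := by rw [hrest]; ring
  calc euclNorm (Pi.single k 1 - p) ≤ Real.sqrt (2 * (1 - p k) ^ 2) := Real.sqrt_le_sqrt hsq
    _ = Real.sqrt 2 * (1 - p k) := by rw [Real.sqrt_mul zero_le_two, Real.sqrt_sq hpk]

end ProbabilityVector

section SumOfSquares

variable {ι : Type*} (s : Finset ι) (f : ι → ℝ)

lemma sum_div_sqrt_card_le_sqrt_sum_sq :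
    (∑ i ∈ s, f i) / Real.sqrt #s ≤ Real.sqrt (∑ i ∈ s, f i ^ 2) := by
  refine div_le_of_le_mul₀ (Real.sqrt_nonneg _) (Real.sqrt_nonneg _) ?_
  rw [← Real.sqrt_mul (sum_nonneg fun i _ => sq_nonneg (f i)), mul_comm]
  exact Real.le_sqrt_of_sq_le (sq_sum_le_card_mul_sum_sq)

lemma sqrt_sum_sq_le_sum (hf : ∀ i ∈ s, 0 ≤ f i) :
    Real.sqrt (∑ i ∈ s, f i ^ 2) ≤ ∑ i ∈ s, f i :=
  Real.sqrt_le_iff.mpr ⟨sum_nonneg hf, sum_sq_le_sq_sum_of_nonneg hf⟩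

end SumOfSquares

theorem token_gradient_bound_general (L : ℕ) (N n : ℕ) (hn : 0 < n)
    (m : ℕ → ℕ)
    (p : Fin N → ℝ) (hp : ∀ j, 0 ≤ p j) (hsum : ∑ j, p j = 1) (k : Fin N)
    (W : Matrix (Fin N) (Fin n) ℝ) (aW bW : ℝ) (haW : 0 ≤ aW)
    (hW : ∀ i, aW ≤ singularValues W i ∧ singularValues W i ≤ bW)
    (J : ℕ → Matrix (Fin n) (Fin n) ℝ) (aJ bJ : ℕ → ℝ) (haJ : ∀ j < L, 0 ≤ aJ j)
    (hJ : ∀ j < L, ∀ i, aJ j ≤ singularValues (J j) i ∧ singularValues (J j) i ≤ bJ j)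
    (G : ∀ l, Matrix (Fin n) (Fin (m l)) ℝ) (aG bG : ℕ → ℝ) (haG : ∀ l < L, 0 ≤ aG l)
    (hG : ∀ l < L, ∀ i, aG l ≤ singularValues (G l) i ∧ singularValues (G l) i ≤ bG l) :
    ((1 - p k) / Real.sqrt L) *
        ∑ l ∈ Finset.range L, (aW * aG l * ∏ j ∈ Finset.Ico l L, aJ j)
      ≤ Real.sqrt (∑ l ∈ Finset.range L,
          euclNorm ((((Pi.single k 1 : Fin N → ℝ) - p) ᵥ* W ᵥ* descProd J l (L - l)) ᵥ* G l) ^ 2) ∧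
    Real.sqrt (∑ l ∈ Finset.range L,
          euclNorm ((((Pi.single k 1 : Fin N → ℝ) - p) ᵥ* W ᵥ* descProd J l (L - l)) ᵥ* G l) ^ 2)
      ≤ Real.sqrt 2 * (1 - p k) *
          ∑ l ∈ Finset.range L, (bW * bG l * ∏ j ∈ Finset.Ico l L, bJ j) := by
  set x : Fin N → ℝ := Pi.single k 1 - p
  set g : ℕ → ℝ := fun l => euclNorm (x ᵥ* W ᵥ* descProd J l (L - l) ᵥ* G l)
  have hIco : ∀ l, ∀ j ∈ Ico l L, j < L := fun l j hj => (mem_Ico.mp hj).2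
  have hbW : 0 ≤ bW := (Real.sqrt_nonneg _).trans (hW k).2
  have hbJ : ∀ j < L, 0 ≤ bJ j := fun j hj => (Real.sqrt_nonneg _).trans (hJ j hj ⟨0, hn⟩).2
  have hbG : ∀ l < L, 0 ≤ bG l := fun l hl => (Real.sqrt_nonneg _).trans (hG l hl ⟨0, hn⟩).2
  have hlayer : ∀ l ∈ range L,
      (aW * aG l * ∏ j ∈ Ico l L, aJ j) * (1 - p k) ≤ g l ∧
      g l ≤ (bW * bG l * ∏ j ∈ Ico l L, bJ j) * (Real.sqrt 2 * (1 - p k)) := by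
    intro l hl
    have hlL := mem_range.mp hl
    constructor
    · refine (mul_le_mul_of_nonneg_left (sub_le_euclNorm_single_sub p k) ?_).trans
        (mul_euclNorm_le_euclNorm_backprop x W J (G l) hlL.le haW (fun i => (hW i).1)
          (fun j hj => haJ j (hIco l j hj)) (fun j hj i => (hJ j (hIco l j hj) i).1) (haG l hlL)
          (fun i => (hG l hlL i).1))
      exact mul_nonneg (mul_nonneg haW (haG l hlL)) (prod_nonneg fun j hj => haJ j (hIco l j hj))
    · refine (euclNorm_backprop_le x W J (G l) hlL.le hbW (fun i => (hW i).2)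
          (fun j hj => hbJ j (hIco l j hj)) (fun j hj i => (hJ j (hIco l j hj) i).2) (hbG l hlL)
          (fun i => (hG l hlL i).2)).trans
        (mul_le_mul_of_nonneg_left (euclNorm_single_sub_le p k hp hsum) ?_)
      exact mul_nonneg (mul_nonneg hbW (hbG l hlL)) (prod_nonneg fun j hj => hbJ j (hIco l j hj))
  constructor
  · calc (1 - p k) / Real.sqrt L * ∑ l ∈ range L, aW * aG l * ∏ j ∈ Ico l L, aJ j
        = (∑ l ∈ range L, (aW * aG l * ∏ j ∈ Ico l L, aJ j) * (1 - p k))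
            / Real.sqrt #(range L) := by
          rw [← sum_mul, card_range]; ring
      _ ≤ (∑ l ∈ range L, g l) / Real.sqrt #(range L) := by gcongr with l hl; exact (hlayer l hl).1
      _ ≤ Real.sqrt (∑ l ∈ range L, g l ^ 2) := sum_div_sqrt_card_le_sqrt_sum_sq _ _
  · calc Real.sqrt (∑ l ∈ range L, g l ^ 2) ≤ ∑ l ∈ range L, g l :=
          sqrt_sum_sq_le_sum _ _ fun l _ => euclNorm_nonneg _
      _ ≤ ∑ l ∈ range L, (bW * bG l * ∏ j ∈ Ico l L, bJ j) * (Real.sqrt 2 * (1 - p k)) :=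
          sum_le_sum fun l hl => (hlayer l hl).2
      _ = Real.sqrt 2 * (1 - p k) * ∑ l ∈ range L, bW * bG l * ∏ j ∈ Ico l L, bJ j := by
          rw [← sum_mul, mul_comm]

/-- Token gradient bound: with layers indexed `l = 0, …, L-1`, blocks
`g_l = (e_k − p) · W · (J_{L-1} ⋯ J_l) · G_l` and `‖g‖₂ = √(∑ l ‖g_l‖₂²)`,
`((1-π)/√L) ∑_l a^W a^G_l ∏_{j=l}^{L-1} a^J_j ≤ ‖g‖₂ ≤
 √2 (1-π) ∑_l b^W b^G_l ∏_{j=l}^{L-1} b^J_j`. -/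
theorem token_gradient_bound (L : ℕ) (hL : 1 ≤ L) (N n : ℕ) (hN : 0 < N) (hn : 0 < n)
    (m : ℕ → ℕ) (hm : ∀ l < L, 0 < m l)
    (p : Fin N → ℝ) (hp : ∀ j, 0 ≤ p j) (hsum : ∑ j, p j = 1) (k : Fin N)
    (W : Matrix (Fin N) (Fin n) ℝ) (aW bW : ℝ) (haW : 0 ≤ aW)
    (hW : ∀ i, aW ≤ singularValues W i ∧ singularValues W i ≤ bW)
    (J : ℕ → Matrix (Fin n) (Fin n) ℝ) (aJ bJ : ℕ → ℝ) (haJ : ∀ j < L, 0 ≤ aJ j)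
    (hJ : ∀ j < L, ∀ i, aJ j ≤ singularValues (J j) i ∧ singularValues (J j) i ≤ bJ j)
    (G : ∀ l, Matrix (Fin n) (Fin (m l)) ℝ) (aG bG : ℕ → ℝ) (haG : ∀ l < L, 0 ≤ aG l)
    (hG : ∀ l < L, ∀ i, aG l ≤ singularValues (G l) i ∧ singularValues (G l) i ≤ bG l) :
    ((1 - p k) / Real.sqrt L) *
        ∑ l ∈ Finset.range L, (aW * aG l * ∏ j ∈ Finset.Ico l L, aJ j)
      ≤ Real.sqrt (∑ l ∈ Finset.range L,
          euclNorm ((((Pi.single k 1 : Fin N → ℝ) - p) ᵥ* W ᵥ* descProd J l (L - l)) ᵥ* G l) ^ 2) ∧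
    Real.sqrt (∑ l ∈ Finset.range L,
          euclNorm ((((Pi.single k 1 : Fin N → ℝ) - p) ᵥ* W ᵥ* descProd J l (L - l)) ᵥ* G l) ^ 2)
      ≤ Real.sqrt 2 * (1 - p k) *
          ∑ l ∈ Finset.range L, (bW * bG l * ∏ j ∈ Finset.Ico l L, bJ j) :=
  token_gradient_bound_general L N n hn m p hp hsum k W aW bW haW hW J aJ bJ haJ hJ G aG bG haG hG
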